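/- arXiv:1401.5656 — 2 statements merged into one kernel-verified Lean document; each statement's English description precedes it below -/
import Mathlib

section
/- Let C be a Cartesian closed category, and let i : A → B, j : A' → B', p : X → Y be morphisms in C. Then j has the left lifting property with respect to the induced map X^B → X^A ×_{Y^A} Y^B if and only if the induced map (A × B') ⊔_{A × A'} (B × A') → B × B' has the left lifting property with respect to p. -/
/-!
STATEMENT 0: Let C be a Cartesian closed category, and let i : A → B, j : A' → B',
p : X → Y be morphisms in C. Then j has the LLP with respect to the induced map
X^B → X^A ×_{Y^A} Y^B if and only if the pushout-product
(A × B') ⊔_{A × A'} (B × A') → B × B' has the LLP with respect to p.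
-/

open CategoryTheory CategoryTheory.Limits MonoidalCategory

namespace Stmt0

variable {C : Type u} [Category.{v} C] [CartesianMonoidalCategory C] [MonoidalClosed C]
  [HasPullbacks C] [HasPushouts C]

/-- The induced map `X^B → X^A ×_{Y^A} Y^B` for `i : A ⟶ B` and `p : X ⟶ Y`. -/
noncomputable def expComparison' {A B X Y : C} (i : A ⟶ B) (p : X ⟶ Y) :
    ((ihom B).obj X) ⟶ pullback ((ihom A).map p) ((MonoidalClosed.pre i).app Y) :=
  pullback.lift ((MonoidalClosed.pre i).app X) ((ihom B).map p) ((MonoidalClosed.pre i).naturality p).symm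

/-- The pushout-product `(A × B') ⊔_{A × A'} (B × A') → B × B'` of
`i : A ⟶ B` and `j : A' ⟶ B'`. -/
noncomputable def pushoutProd {A B A' B' : C} (i : A ⟶ B) (j : A' ⟶ B') :
    pushout (A ◁ j) (i ▷ A') ⟶ B ⊗ B' :=
  pushout.desc (i ▷ B') (B ◁ j) (whisker_exchange i j)


/-! Under the tensor–hom adjunction, which is a parametrized adjunction
`curriedTensor C ⊣₂ internalHom`, commutative squares from `pushoutProd i j` to `p` correspond
to commutative squares from `j` to `expComparison' i p`, and so do their diagonal fillers. -/

open MonoidalClosed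

/-- The span is taken in the opposite order from `PushoutObjObj.ofHasPushout`, hence the flip. -/
noncomputable def pushoutProdPushoutObjObj {A B A' B' : C} (i : A ⟶ B) (j : A' ⟶ B') :
    (curriedTensor C).PushoutObjObj i j where
  pt := pushout (A ◁ j) (i ▷ A')
  inl := pushout.inr _ _
  inr := pushout.inl _ _
  isPushout := (IsPushout.of_hasPushout _ _).flip
  ι := pushoutProd i j
  inl_ι := pushout.inr_desc _ _ _
  inr_ι := pushout.inl_desc _ _ _

theorem llp_expComparison_iff_pushoutProd_llp
    {A B A' B' X Y : C} (i : A ⟶ B) (j : A' ⟶ B') (p : X ⟶ Y) :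
    HasLiftingProperty j (expComparison' i p) ↔
      HasLiftingProperty (pushoutProd i j) p :=
  -- `expComparison' i p` is definitionally the `π` of `PullbackObjObj.ofHasPullback internalHom i p`
  (ParametrizedAdjunction.hasLiftingProperty_iff internalHomAdjunction₂
    (pushoutProdPushoutObjObj i j) (Functor.PullbackObjObj.ofHasPullback internalHom i p)).symm

end Stmt0
end

section
/- Let f : X → Y be a trivial fibration of simplicial sets. Then the simplicial set of sections Map_Y(Y, X) of f is nonempty and connected. -/
set_option linter.unnecessarySimpa false

open CategoryTheory CategoryTheory.Limits MonoidalCategory Simplicial SSet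

namespace KQ

instance homToZeroSubsingleton (a : SimplexCategory) :
    Subsingleton (a ⟶ (⦋0⦌ : SimplexCategory)) :=
  ⟨fun f g => by
    apply SimplexCategory.Hom.ext'
    apply OrderHom.ext
    funext x
    apply Fin.ext
    have h1 : ((f.toOrderHom x : Fin (⦋0⦌.len + 1)) : ℕ) < 0 + 1 := by
      simpa using (f.toOrderHom x).isLt
    have h2 : ((g.toOrderHom x : Fin (⦋0⦌.len + 1)) : ℕ) < 0 + 1 := by
      simpa using (g.toOrderHom x).isLt
    omega⟩

instance (m : SimplexCategoryᵒᵖ) : Subsingleton ((Δ[0] : SSet).obj m) :=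
  (SSet.stdSimplex.objEquiv).subsingleton

/-- `Δ[0]` is a terminal simplicial set. -/
noncomputable def ptIsTerminal : IsTerminal (Δ[0] : SSet) :=
  IsTerminal.ofUniqueHom
    (fun X =>
      { app := fun m => TypeCat.ofHom fun _ => (SSet.stdSimplex.objEquiv).symm
          (SimplexCategory.const m.unop ⦋0⦌ 0)
        naturality := fun _ _ _ => ConcreteCategory.hom_ext _ _ fun _ => Subsingleton.elim _ _ })
    (fun X m => by
      apply SSet.hom_ext
      intro n
      apply ConcreteCategory.hom_ext
      intro x
      apply Subsingleton.elim)

/-- A map of simplicial sets is a Kan fibration if it has the right lifting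
property with respect to all horn inclusions `Λ[n, i] ⟶ Δ[n]`, `n ≥ 1`. -/
def KanFib {X Y : SSet} (f : X ⟶ Y) : Prop :=
  ∀ (n : ℕ) (i : Fin (n + 2)), HasLiftingProperty (horn (n + 1) i).ι f

/-- A map of simplicial sets is a trivial fibration if it has the right lifting
property with respect to all boundary inclusions `∂Δ[n] ⟶ Δ[n]`. -/
def TrivFib {X Y : SSet} (f : X ⟶ Y) : Prop :=
  ∀ (n : ℕ), HasLiftingProperty (boundary n).ι f

/-- Anodyne maps: left lifting property with respect to all Kan fibrations.
These are exactly the trivial cofibrations of the Kan–Quillen model structure. -/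
def Anodyne {A B : SSet} (i : A ⟶ B) : Prop :=
  ∀ ⦃X Y : SSet⦄ (p : X ⟶ Y), KanFib p → HasLiftingProperty i p

/-- Weak homotopy equivalences of simplicial sets, characterized as the maps
that factor as an anodyne map (trivial cofibration) followed by a trivial
fibration. -/
def WeakEquiv {X Y : SSet} (f : X ⟶ Y) : Prop :=
  ∃ (Z : SSet) (i : X ⟶ Z) (p : Z ⟶ Y), Anodyne i ∧ TrivFib p ∧ i ≫ p = f

/-- The two endpoint inclusions `Δ[0] ⟶ Δ[1]`. -/
noncomputable def vtx (i : Fin 2) : (Δ[0] : SSet) ⟶ Δ[1] :=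
  SSet.stdSimplex.map (SimplexCategory.δ i.rev)

/-- Endpoint inclusions of the cylinder `X ⟶ X ⊗ Δ[1]`. -/
noncomputable def cylIncl (i : Fin 2) (X : SSet) : X ⟶ X ⊗ Δ[1] :=
  CartesianMonoidalCategory.lift (𝟙 X) (ptIsTerminal.from X ≫ vtx i)

end KQ

/-!
A trivial fibration has the right lifting property against every monomorphism, because every
monomorphism of simplicial sets is a transfinite composition of pushouts of coproducts of boundary
inclusions (its relative skeletal filtration). A section of `f` is a lift against `∅ ⟶ Y`, and a
homotopy over `Y` between two sections `s` and `t` is a lift against the monomorphism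
`Y ⨿ Y ⟶ Y ⊗ Δ[1]` formed by the two ends of the cylinder.
-/

universe u

namespace SSet

lemma coprod_obj_cases {A B : SSet.{u}} {n : SimplexCategoryᵒᵖ} (z : (A ⨿ B).obj n) :
    (∃ a, (coprod.inl : A ⟶ A ⨿ B).app n a = z) ∨
      ∃ b, (coprod.inr : B ⟶ A ⨿ B).app n b = z := by
  obtain ⟨⟨_ | _⟩, x, rfl⟩ := Types.jointly_surjective_of_isColimit
    (isColimitOfPreserves ((evaluation _ _).obj n) (coprodIsCoprod A B)) z
  exacts [Or.inl ⟨x, rfl⟩, Or.inr ⟨x, rfl⟩]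

lemma mono_coprod_desc {A B Z : SSet.{u}} (i : A ⟶ Z) (j : B ⟶ Z) [Mono i] [Mono j]
    (hdisj : ∀ n (a : A.obj n) (b : B.obj n), i.app n a ≠ j.app n b) :
    Mono (coprod.desc i j) := by
  rw [NatTrans.mono_iff_mono_app]
  intro n
  rw [mono_iff_injective]
  have hl (a : A.obj n) :
      (coprod.desc i j).app n ((coprod.inl : A ⟶ A ⨿ B).app n a) = i.app n a :=
    congr_app (coprod.inl_desc i j) n ▸ rfl
  have hr (b : B.obj n) :
      (coprod.desc i j).app n ((coprod.inr : B ⟶ A ⨿ B).app n b) = j.app n b :=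
    congr_app (coprod.inr_desc i j) n ▸ rfl
  have hi : Function.Injective (i.app n) := (mono_iff_injective _).1 inferInstance
  have hj : Function.Injective (j.app n) := (mono_iff_injective _).1 inferInstance
  rintro x y hxy
  rcases coprod_obj_cases x with ⟨a, rfl⟩ | ⟨b, rfl⟩ <;>
    rcases coprod_obj_cases y with ⟨a', rfl⟩ | ⟨b', rfl⟩ <;>
    simp only [hl, hr] at hxy
  · rw [hi hxy]
  · exact absurd hxy (hdisj n a b')
  · exact absurd hxy.symm (hdisj n a' b)
  · rw [hj hxy]

lemma ι₀_app_ne_ι₁_app {X : SSet.{u}} (n : SimplexCategoryᵒᵖ) (x y : X.obj n) :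
    (ι₀ : X ⟶ X ⊗ Δ[1]).app n x ≠ (ι₁ : X ⟶ X ⊗ Δ[1]).app n y := by
  induction n using Opposite.rec with | op n => ?_
  induction n using SimplexCategory.rec with | _ m => ?_
  intro hxy
  simpa using congrArg (fun z => z.2 0) hxy

instance mono_coprod_desc_ι₀_ι₁ (X : SSet.{u}) :
    Mono (coprod.desc (ι₀ : X ⟶ X ⊗ Δ[1]) ι₁) :=
  have : Mono (ι₀ : X ⟶ X ⊗ Δ[1]) := mono_of_mono_fac (ι₀_fst X)
  have : Mono (ι₁ : X ⟶ X ⊗ Δ[1]) := mono_of_mono_fac (ι₁_fst X)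
  mono_coprod_desc _ _ ι₀_app_ne_ι₁_app

end SSet

namespace KQ

lemma ptIsTerminal_from_comp_vtx (X : SSet.{u}) (i : Fin 2) :
    ptIsTerminal.from X ≫ vtx i = const (stdSimplex.obj₀Equiv.{u}.symm i) := by
  ext m x
  fin_cases i <;> rfl

lemma cylIncl_zero (X : SSet.{u}) : cylIncl 0 X = ι₀ := by
  rw [cylIncl, ptIsTerminal_from_comp_vtx]
  rfl

lemma cylIncl_one (X : SSet.{u}) : cylIncl 1 X = ι₁ := by
  rw [cylIncl, ptIsTerminal_from_comp_vtx]
  rfl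

section

variable {X Y : SSet.{u}} {f : X ⟶ Y}

lemma TrivFib.hasLiftingProperty (hf : TrivFib f) {A B : SSet.{u}} (i : A ⟶ B) [Mono i] :
    HasLiftingProperty i f := by
  have hI : modelCategoryQuillen.I.rlp f := by
    rintro _ _ _ ⟨n⟩
    exact hf n
  exact (rlp_monomorphisms ▸ hI) i (.infer_property i)

lemma TrivFib.exists_section (hf : TrivFib f) : ∃ s : Y ⟶ X, s ≫ f = 𝟙 Y := by
  have := hf.hasLiftingProperty (initial.to Y)
  have sq : CommSq (initial.to X) (initial.to Y) f (𝟙 Y) := ⟨initial.hom_ext _ _⟩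
  exact ⟨sq.lift, sq.fac_right⟩

lemma TrivFib.exists_homotopy_over (hf : TrivFib f) {s t : Y ⟶ X} (hs : s ≫ f = 𝟙 Y)
    (ht : t ≫ f = 𝟙 Y) :
    ∃ h : Y ⊗ Δ[1] ⟶ X,
      h ≫ f = CartesianMonoidalCategory.fst Y Δ[1] ∧ ι₀ ≫ h = s ∧ ι₁ ≫ h = t := by
  have := hf.hasLiftingProperty (coprod.desc (ι₀ : Y ⟶ Y ⊗ Δ[1]) ι₁)
  have sq :
      CommSq (coprod.desc s t) (coprod.desc ι₀ ι₁) f (CartesianMonoidalCategory.fst Y Δ[1]) :=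
    ⟨by ext <;> simp [hs, ht]⟩
  refine ⟨sq.lift, sq.fac_right, ?_, ?_⟩
  · simpa only [coprod.inl_desc_assoc, coprod.inl_desc] using coprod.inl ≫= sq.fac_left
  · simpa only [coprod.inr_desc_assoc, coprod.inr_desc] using coprod.inr ≫= sq.fac_left

end

theorem sections_of_trivFib_nonempty_connected {X Y : SSet} (f : X ⟶ Y)
    (hf : TrivFib f) :
    (∃ s : Y ⟶ X, s ≫ f = 𝟙 Y) ∧
    (∀ s t : Y ⟶ X, s ≫ f = 𝟙 Y → t ≫ f = 𝟙 Y →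
      ∃ h : Y ⊗ Δ[1] ⟶ X,
        h ≫ f = CartesianMonoidalCategory.fst Y Δ[1] ∧
        cylIncl 0 Y ≫ h = s ∧ cylIncl 1 Y ≫ h = t) := by
  refine ⟨hf.exists_section, fun s t hs ht => ?_⟩
  rw [cylIncl_zero, cylIncl_one]
  exact hf.exists_homotopy_over hs ht

end KQ
end
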